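/- Let S be a consistent queryless schedule. Then: N^min_O(S) = (N^min_I(S) − {n | ∃(m,l,n) ∈ DEL(S)}) ∪ {n | ∃(m,l,n) ∈ ADD(S)}; N^max_O(S) = (N^max_I(S) − {n | ∃(m,l,n) ∈ DEL(S)}) ∪ {n | ∃(m,l,n) ∈ ADD(S)}; E^min_O(S) = (E^min_I(S) − DEL(S)) ∪ ADD(S); and E^max_O(S) = (E^max_I(S) − DEL(S)) ∪ ADD(S). -/

import Mathlib

attribute [local instance] Classical.propDecidable

/-! ## Data model: nodes, labels, edges, document trees -/

abbrev Node := ℕ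
abbrev Label := ℕ
abbrev Edge := Node × Label × Node

/-- A candidate document tree: a finite node set, a finite edge set, a root. -/
structure Tree3 where
  N : Finset Node
  E : Finset Edge
  root : Node

/-- The edge-step relation of a set of labelled edges. -/
def estep (E : Set Edge) (a b : Node) : Prop := ∃ l : Label, (a, l, b) ∈ E

/-- `T` is a document tree: the root is a node, edges connect nodes, every node has at
most one incoming edge, the root has none, and every node is reachable from the root
(edges are directed from parent to child). -/
def IsDT (T : Tree3) : Prop :=
  T.root ∈ T.N ∧
  (∀ e ∈ T.E, e.1 ∈ T.N ∧ e.2.2 ∈ T.N) ∧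
  (∀ e ∈ T.E, ∀ e' ∈ T.E, e.2.2 = e'.2.2 → e = e') ∧
  (∀ e ∈ T.E, e.2.2 ≠ T.root) ∧
  (∀ n ∈ T.N, Relation.ReflTransGen (estep (↑T.E)) T.root n)

/-! ## Update operations and queryless schedules -/

inductive Op where
  | add : Node → Label → Node → Op
  | del : Node → Label → Node → Op
deriving DecidableEq

/-- Apply an update operation to a tree; `none` when the operation is undefined. -/
noncomputable def applyOp (o : Op) (T : Tree3) : Option Tree3 :=
  match o with
  | Op.add m l n =>
      let T' : Tree3 := ⟨insert n T.N, insert (m, l, n) T.E, T.root⟩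
      if (m, l, n) ∈ T.E ∨ ¬ IsDT T' then none else some T'
  | Op.del m l n =>
      let T' : Tree3 := ⟨T.N.erase n, T.E.erase (m, l, n), T.root⟩
      if (m, l, n) ∉ T.E ∨ ¬ IsDT T' then none else some T'

/-- An action is an operation tagged with a transaction identifier. -/
abbrev QLAction := Op × ℕ

/-- A queryless (QL) schedule is a finite sequence of actions. -/
abbrev QLSchedule := List QLAction

/-- Apply a QL schedule to a tree, operation by operation. -/
noncomputable def applyQL : QLSchedule → Tree3 → Option Tree3
  | [], T => some T
  | a :: rest, T => (applyOp a.1 T).bind (applyQL rest)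

/-- `S[T]` is defined (and `T` is a document tree). -/
def DefinedOn (S : QLSchedule) (T : Tree3) : Prop := IsDT T ∧ (applyQL S T).isSome

/-- A QL schedule is consistent iff it is defined on at least one document tree. -/
def ConsistentQL (S : QLSchedule) : Prop := ∃ T, DefinedOn S T

def Op.src : Op → Node
  | Op.add m _ _ => m
  | Op.del m _ _ => m

def Op.tgt : Op → Node
  | Op.add _ _ n => n
  | Op.del _ _ n => n

def Op.edge : Op → Edge
  | Op.add m l n => (m, l, n)
  | Op.del m l n => (m, l, n)

/-- The list of operations of a QL schedule. -/
def ops (S : QLSchedule) : List Op := S.map Prod.fst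

/-- The operation containing the first occurrence of the node `x` in `S`, if any. -/
def firstNodeOp (S : QLSchedule) (x : Node) : Option Op :=
  (ops S).find? (fun o => (o.src == x) || (o.tgt == x))

/-- The operation containing the last occurrence of the node `x` in `S`, if any. -/
def lastNodeOp (S : QLSchedule) (x : Node) : Option Op :=
  (ops S).reverse.find? (fun o => (o.src == x) || (o.tgt == x))

/-- The operation containing the first occurrence of the edge `e` in `S`, if any. -/
def firstEdgeOp (S : QLSchedule) (e : Edge) : Option Op :=
  (ops S).find? (fun o => o.edge == e)

/-- The operation containing the last occurrence of the edge `e` in `S`, if any. -/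
def lastEdgeOp (S : QLSchedule) (e : Edge) : Option Op :=
  (ops S).reverse.find? (fun o => o.edge == e)

/-- Some edge with target `x` occurs in `S`. -/
def occursTgt (S : QLSchedule) (x : Node) : Prop := ∃ o ∈ ops S, o.tgt = x

/-- `N^min_I(S)`. -/
def NminI (S : QLSchedule) : Set Node :=
  {x | ∃ l n, firstNodeOp S x = some (Op.add x l n)} ∪
  {x | ∃ l n, firstNodeOp S x = some (Op.del x l n)} ∪
  {x | ∃ m l, firstNodeOp S x = some (Op.del m l x)}

/-- `N^max_I(S)`. -/
def NmaxI (S : QLSchedule) : Set Node :=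
  {x | ¬ ∃ m l, firstNodeOp S x = some (Op.add m l x)}

/-- `E^min_I(S)`. -/
def EminI (S : QLSchedule) : Set Edge :=
  {e | firstEdgeOp S e = some (Op.del e.1 e.2.1 e.2.2)}

/-- `E^max_I(S)`. -/
def EmaxI (S : QLSchedule) : Set Edge :=
  EminI S ∪ {e | ¬ occursTgt S e.1 ∧ ¬ occursTgt S e.2.2}

/-- `N^min_O(S)`. -/
def NminO (S : QLSchedule) : Set Node :=
  {x | ∃ l n, lastNodeOp S x = some (Op.del x l n)} ∪
  {x | ∃ l n, lastNodeOp S x = some (Op.add x l n)} ∪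
  {x | ∃ m l, lastNodeOp S x = some (Op.add m l x)}

/-- `N^max_O(S)`. -/
def NmaxO (S : QLSchedule) : Set Node :=
  {x | ¬ ∃ m l, lastNodeOp S x = some (Op.del m l x)}

/-- `E^min_O(S)`. -/
def EminO (S : QLSchedule) : Set Edge :=
  {e | lastEdgeOp S e = some (Op.add e.1 e.2.1 e.2.2)}

/-- `E^max_O(S)`. -/
def EmaxO (S : QLSchedule) : Set Edge :=
  EminO S ∪ {e | ¬ occursTgt S e.1 ∧ ¬ occursTgt S e.2.2}

/-- `ADD(S)`: edges whose last occurrence in `S` is an addition. -/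
def ADDs (S : QLSchedule) : Set Edge :=
  {e | lastEdgeOp S e = some (Op.add e.1 e.2.1 e.2.2)}

/-- `DEL(S)`: edges whose last occurrence in `S` is a deletion. -/
def DELs (S : QLSchedule) : Set Edge :=
  {e | lastEdgeOp S e = some (Op.del e.1 e.2.1 e.2.2)}

/-- `T` is a basic input tree of `S`. -/
def BasicInput (S : QLSchedule) (T : Tree3) : Prop :=
  IsDT T ∧ NminI S ⊆ ↑T.N ∧ ↑T.N ⊆ NmaxI S ∧ EminI S ⊆ ↑T.E ∧ ↑T.E ⊆ EmaxI S

/-- `T` is a basic output tree of `S`. -/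
def BasicOutput (S : QLSchedule) (T : Tree3) : Prop :=
  IsDT T ∧ NminO S ⊆ ↑T.N ∧ ↑T.N ⊆ NmaxO S ∧ EminO S ⊆ ↑T.E ∧ ↑T.E ⊆ EmaxO S

/-- The C-condition (nine clauses). -/
def CCond (S : QLSchedule) : Prop :=
  (∀ i j (n l₁ n₁ n₂ l₂ : ℕ), i < j →
      (ops S)[i]? = some (Op.add n l₁ n₁) → (ops S)[j]? = some (Op.add n₂ l₂ n) →
      ∃ k : ℕ, i < k ∧ k < j ∧ (ops S)[k]? = some (Op.del n l₁ n₁)) ∧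
  (∀ i j (n₁ l₁ n n₂ l₂ : ℕ), i < j →
      (ops S)[i]? = some (Op.add n₁ l₁ n) → (ops S)[j]? = some (Op.add n₂ l₂ n) →
      ∃ k : ℕ, i < k ∧ k < j ∧ (ops S)[k]? = some (Op.del n₁ l₁ n)) ∧
  (∀ i j (n l₁ n₁ n₂ l₂ : ℕ), i < j →
      (ops S)[i]? = some (Op.add n l₁ n₁) → (ops S)[j]? = some (Op.del n₂ l₂ n) →
      ∃ k : ℕ, i < k ∧ k < j ∧ (ops S)[k]? = some (Op.del n l₁ n₁)) ∧
  (∀ i j (n₁ l₁ n l₂ n₂ : ℕ), i < j →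
      (ops S)[i]? = some (Op.add n₁ l₁ n) → (ops S)[j]? = some (Op.del n l₂ n₂) →
      ∃ k : ℕ, i < k ∧ k < j ∧ (ops S)[k]? = some (Op.add n l₂ n₂)) ∧
  (∀ i j (n₁ l₁ n n₂ l₂ : ℕ), i < j → (n₁, l₁) ≠ (n₂, l₂) →
      (ops S)[i]? = some (Op.add n₁ l₁ n) → (ops S)[j]? = some (Op.del n₂ l₂ n) →
      ∃ k : ℕ, i < k ∧ k < j ∧ (ops S)[k]? = some (Op.del n₁ l₁ n)) ∧
  (∀ i j (n l₁ n₁ n₂ l₂ : ℕ), i < j →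
      (ops S)[i]? = some (Op.del n l₁ n₁) → (ops S)[j]? = some (Op.add n₂ l₂ n) →
      ∃ k : ℕ, ∃ n₃ l₃ : ℕ, i < k ∧ k < j ∧ (ops S)[k]? = some (Op.del n₃ l₃ n)) ∧
  (∀ i j (n₁ l₁ n l₂ n₂ : ℕ), i < j →
      (ops S)[i]? = some (Op.del n₁ l₁ n) → (ops S)[j]? = some (Op.add n l₂ n₂) →
      ∃ k : ℕ, ∃ n₃ l₃ : ℕ, i < k ∧ k < j ∧ (ops S)[k]? = some (Op.add n₃ l₃ n)) ∧
  (∀ i j (n₁ l₁ n l₂ n₂ : ℕ), i < j →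
      (ops S)[i]? = some (Op.del n₁ l₁ n) → (ops S)[j]? = some (Op.del n l₂ n₂) →
      ∃ k : ℕ, ∃ n₃ l₃ : ℕ, i < k ∧ k < j ∧ (ops S)[k]? = some (Op.add n₃ l₃ n)) ∧
  (∀ i j (n₁ l₁ n n₂ l₂ : ℕ), i < j →
      (ops S)[i]? = some (Op.del n₁ l₁ n) → (ops S)[j]? = some (Op.del n₂ l₂ n) →
      ∃ k : ℕ, i < k ∧ k < j ∧ (ops S)[k]? = some (Op.add n₂ l₂ n))

/-! ## Transactions, equivalence and serializability of QL schedules -/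

/-- Two QL schedules are interleavings of the same set of transactions: for every
transaction identifier, the subsequences of actions with that identifier coincide. -/
def SameTrans (S S' : QLSchedule) : Prop :=
  ∀ t : ℕ, S.filter (fun a => a.2 == t) = S'.filter (fun a => a.2 == t)

/-- A schedule is serial iff the actions of each transaction occur consecutively. -/
def Serial (S : QLSchedule) : Prop :=
  ∀ i j k : ℕ, i ≤ j → j ≤ k →
    ∀ a b c : QLAction, S[i]? = some a → S[j]? = some b → S[k]? = some c →
      a.2 = c.2 → b.2 = a.2

/-- Two QL schedules are equivalent: they are defined on the same non-empty set of
document trees and produce the same output tree on each of them. -/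
def EquivQL (S S' : QLSchedule) : Prop :=
  (∃ T, DefinedOn S T) ∧ ∀ T, IsDT T → applyQL S T = applyQL S' T

/-- A QL schedule is serializable iff it is equivalent to a serial schedule over the
same set of transactions. -/
def SerializableQL (S : QLSchedule) : Prop :=
  ∃ S', Serial S' ∧ SameTrans S S' ∧ EquivQL S S'

/-! ## Paths and forests -/

/-- `SPath G m lp n`: there is a directed path from `m` to `n` in the edge set `G`
whose label path is `lp`. -/
inductive SPath (G : Set Edge) : Node → List Label → Node → Prop where
  | nil (n : Node) : SPath G n [] n
  | cons {m n n' : Node} {l : Label} {lp : List Label} :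
      (m, l, n) ∈ G → SPath G n lp n' → SPath G m (l :: lp) n'

/-- A set of edges is a forest: no two distinct edges share a target, and
there is no (non-trivial) directed cycle. -/
def IsForest (G : Set Edge) : Prop :=
  (∀ e ∈ G, ∀ e' ∈ G, e.2.2 = e'.2.2 → e = e') ∧
  ¬ ∃ (n : Node) (lp : List Label), lp ≠ [] ∧ SPath G n lp n

/-! ## Path expressions -/

inductive Step where
  | star : Step
  | lab : Label → Step
deriving DecidableEq

/-- Path expressions: `ε`, `pe/f` and `pe//f` (a single step `f` is `ε/f`). -/
inductive PathExpr where
  | eps : PathExpr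
  | child : PathExpr → Step → PathExpr
  | desc : PathExpr → Step → PathExpr
deriving DecidableEq

def Step.mtch : Step → Label → Prop
  | Step.star, _ => True
  | Step.lab l, l' => l = l'

def Step.mtchB : Step → Label → Bool
  | Step.star, _ => true
  | Step.lab l, l' => l == l'

/-- The set `L(pe)` of label paths represented by a path expression
(a label path is a list of labels). -/
def PathExpr.lang : PathExpr → Set (List Label)
  | PathExpr.eps => {[]}
  | PathExpr.child pe f => {w | ∃ u l, u ∈ pe.lang ∧ f.mtch l ∧ w = u ++ [l]}
  | PathExpr.desc pe f => {w | ∃ u v l, u ∈ pe.lang ∧ f.mtch l ∧ w = u ++ v ++ [l]}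

/-- `SOP` on a *reversed* label path. -/
def SOPr : PathExpr → List Label → Set PathExpr
  | pe, [] => {pe}
  | PathExpr.eps, _ :: _ => ∅
  | PathExpr.child pe f, l :: lp => if f.mtchB l then SOPr pe lp else ∅
  | PathExpr.desc pe f, l :: lp =>
      if f.mtchB l then SOPr pe lp ∪ SOPr (PathExpr.desc pe Step.star) lp else ∅
termination_by pe lp => lp.length

/-- `SOP(pe)_lp`: the set of non-empty `lp`-prefixes of `pe`. -/
def SOP (pe : PathExpr) (lp : List Label) : Set PathExpr := SOPr pe lp.reverse

/-- `L(SOP(pe)_lp)`. -/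
def LSOP (pe : PathExpr) (lp : List Label) : Set (List Label) :=
  ⋃ pe' ∈ SOP pe lp, pe'.lang

/-- `pe/lp`: append a label path to a path expression with `/` separators. -/
def PathExpr.appendLP : PathExpr → List Label → PathExpr
  | pe, [] => pe
  | pe, l :: lp => PathExpr.appendLP (PathExpr.child pe (Step.lab l)) lp

/-- The prefixes of a path expression (including `ε`). -/
def PathExpr.prefixes : PathExpr → Set PathExpr
  | PathExpr.eps => {PathExpr.eps}
  | PathExpr.child pe f => insert (PathExpr.child pe f) pe.prefixes
  | PathExpr.desc pe f => insert (PathExpr.desc pe f) pe.prefixes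

/-! ## Schedules with queries -/

inductive GOp where
  | query : Node → PathExpr → GOp
  | add : Node → Label → Node → GOp
  | del : Node → Label → Node → GOp

abbrev GAction := GOp × ℕ

/-- A (general) schedule is a finite sequence of query/add/del actions. -/
abbrev Schedule := List GAction

def GOp.toOp? : GOp → Option Op
  | GOp.query _ _ => none
  | GOp.add m l n => some (Op.add m l n)
  | GOp.del m l n => some (Op.del m l n)

/-- The QL schedule of a schedule: remove all query actions. -/
def qlOf (S : Schedule) : QLSchedule :=
  S.filterMap (fun a => (a.1.toOp?).map (fun o => (o, a.2)))

/-- The answer of `query(n,pe)` on a tree `T`. -/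
def queryAnswer (n : Node) (pe : PathExpr) (T : Tree3) : Set Node :=
  {n' | n' ∈ T.N ∧ ∃ lp, SPath (↑T.E) n lp n' ∧ lp ∈ pe.lang}

/-- A schedule is consistent iff its QL schedule is. -/
def ConsistentSched (S : Schedule) : Prop := ConsistentQL (qlOf S)

/-- Run a schedule on a tree: the final tree together with, for each query (in order),
its transaction identifier and its answer; `none` if some update is undefined. -/
noncomputable def runQ : Schedule → Tree3 → Option (Tree3 × List (ℕ × Set Node))
  | [], T => some (T, [])
  | (GOp.query n pe, t) :: rest, T =>
      (runQ rest T).map (fun p => (p.1, (t, queryAnswer n pe T) :: p.2))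
  | (GOp.add m l n, _) :: rest, T =>
      (applyOp (Op.add m l n) T).bind (runQ rest)
  | (GOp.del m l n, _) :: rest, T =>
      (applyOp (Op.del m l n) T).bind (runQ rest)

/-- Two schedules are equivalent: defined on the same non-empty set of document trees,
and on each such tree they produce the same output tree and, per transaction, the same
sequence of query answers. -/
def EquivSched (S₁ S₂ : Schedule) : Prop :=
  (∃ T, IsDT T ∧ (runQ S₁ T).isSome) ∧
  ∀ T, IsDT T →
    ((runQ S₁ T).isSome ↔ (runQ S₂ T).isSome) ∧
    ∀ p₁ p₂, runQ S₁ T = some p₁ → runQ S₂ T = some p₂ →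
      p₁.1 = p₂.1 ∧
      ∀ t : ℕ, (p₁.2.filter (fun x => x.1 == t)).map Prod.snd
             = (p₂.2.filter (fun x => x.1 == t)).map Prod.snd

/-- Two schedules are interleavings of the same set of transactions. -/
def SameTransG (S S' : Schedule) : Prop :=
  ∀ t : ℕ, S.filter (fun a => a.2 == t) = S'.filter (fun a => a.2 == t)

/-- A schedule is serial iff the actions of each transaction occur consecutively. -/
def SerialG (S : Schedule) : Prop :=
  ∀ i j k : ℕ, i ≤ j → j ≤ k →
    ∀ a b c : GAction, S[i]? = some a → S[j]? = some b → S[k]? = some c →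
      a.2 = c.2 → b.2 = a.2

/-- A schedule is serializable iff it is equivalent to a serial schedule over the same
set of transactions. -/
def SerializableSched (S : Schedule) : Prop :=
  ∃ S', SerialG S' ∧ SameTransG S S' ∧ EquivSched S S'

/-- `E^min(S^Q)` where `Q` is the action at position `i` of `S`. -/
def EminSQ (S : Schedule) (i : ℕ) : Set Edge :=
  (EminI (qlOf S) \ DELs (qlOf (S.take i))) ∪ ADDs (qlOf (S.take i))

/-- `E^max(S^Q)` where `Q` is the action at position `i` of `S`. -/
def EmaxSQ (S : Schedule) (i : ℕ) : Set Edge :=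
  (EmaxI (qlOf S) \ DELs (qlOf (S.take i))) ∪ ADDs (qlOf (S.take i))

/-- `x` is a non-building-node of `S`: some `add(m,l,x)` or `del(m,l,x)` occurs in `S`. -/
def NonBuilding (S : Schedule) (x : Node) : Prop :=
  ∃ a ∈ S, ∃ m l, a.1 = GOp.add m l x ∨ a.1 = GOp.del m l x

/-- `x` is a node of the graph (edge set) `G`. -/
def NodeOfGraph (G : Set Edge) (x : Node) : Prop := ∃ e ∈ G, e.1 = x ∨ e.2.2 = x

/-- `x` has a parent in the edge set `G`. -/
def HasParent (G : Set Edge) (x : Node) : Prop := ∃ e ∈ G, e.2.2 = x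

/-- `PQRN(S,Q)` for the query `Q = query(n,pe)` at position `i` of `S`:
the nodes `m` of the graph `E^min(S^Q)` that are non-building-nodes, whose root
ancestor `r` in the forest `E^min(S^Q)` (the node with no parent from which `m` is
reachable, via the label path `ALabel(S^Q,m)`) is a building-node different from `n`,
and such that `L(SOP(pe)_{ALabel(S^Q,m)}) ≠ ∅`. -/
def PQRN (S : Schedule) (i : ℕ) (n : Node) (pe : PathExpr) : Set Node :=
  {m | NodeOfGraph (EminSQ S i) m ∧ NonBuilding S m ∧
       ∃ r lp, SPath (EminSQ S i) r lp m ∧ ¬ HasParent (EminSQ S i) r ∧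
         ¬ NonBuilding S r ∧ r ≠ n ∧ LSOP pe lp ≠ ∅}

/-- The answer of the query at position `i` of `S` when `S` is applied to `T`
(the query is evaluated on the tree obtained by applying the actions before it). -/
noncomputable def answerAt (S : Schedule) (i : ℕ) (T : Tree3) : Option (Set Node) :=
  match S[i]? with
  | some (GOp.query n pe, _) => (applyQL (qlOf (S.take i)) T).map (queryAnswer n pe)
  | _ => none

/-!
Fix a document tree `T` on which `S` is defined, with output tree `T'`. Consistency rules out
loops `(x, l, x)`, and each operation constrains the presence of the nodes it mentions: an
`add(_, _, x)` needs `x` absent and makes it present, a `del(_, _, x)` does the opposite, and an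
operation with source `x` needs and keeps `x` present. So for a node `x` mentioned in `S` the first
operation mentioning it decides whether `x ∈ T`, and the last one whether `x ∈ T'`; the four
node sets are `{x mentioned, x ∈ T}`, `{x unmentioned or x ∈ T}` and the same with `T'`.
The last operation with target `x` is also the last one on its own edge, whence
`x ∈ T' ↔ (x ∈ T ∧ no edge into x is in DEL(S)) ∨ some edge into x is in ADD(S)`; this gives
the node identities. The edge identities only compare first and last occurrences.
-/

theorem List.find?_eq_some_of_imp {α : Type*} {p q : α → Bool} {l : List α} {a : α}
    (h : l.find? q = some a) (hpa : p a) (hpq : ∀ b, p b → q b) : l.find? p = some a := by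
  obtain ⟨-, as, bs, rfl, has⟩ := List.find?_eq_some_iff_append.mp h
  exact List.find?_eq_some_iff_append.mpr
    ⟨hpa, as, bs, rfl, fun c hc => by
      cases hp : p c
      · rfl
      · simpa [hpq c hp] using has c hc⟩

theorem List.eq_append_cons_of_find?_reverse_eq_some {α : Type*} {p : α → Bool} {l : List α}
    {a : α} (h : l.reverse.find? p = some a) :
    ∃ as bs, l = as ++ a :: bs ∧ ∀ b ∈ bs, p b = false := by
  obtain ⟨-, as, bs, hl, has⟩ := List.find?_eq_some_iff_append.mp h
  refine ⟨bs.reverse, as.reverse, ?_, fun b hb => by simpa using has b (List.mem_reverse.mp hb)⟩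
  rw [← List.reverse_reverse l, hl]
  simp

noncomputable def applyOps (os : List Op) (T : Tree3) : Option Tree3 :=
  os.foldlM (fun T o => applyOp o T) T

theorem applyQL_eq_applyOps (S : QLSchedule) (T : Tree3) : applyQL S T = applyOps (ops S) T := by
  induction S generalizing T with
  | nil => rfl
  | cons a S ih =>
    rw [applyQL, show applyQL S = applyOps (ops S) from funext ih]
    rfl

theorem applyOps_append {os₁ os₂ : List Op} {T : Tree3} :
    applyOps (os₁ ++ os₂) T = (applyOps os₁ T).bind (applyOps os₂) := by
  simp only [applyOps, List.foldlM_append]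
  rfl

section ApplyOp

variable {o : Op} {T T' : Tree3} {x : Node} {e : Edge}

theorem applyOp_add_eq_some {m l n : Node} (h : applyOp (.add m l n) T = some T') :
    T' = ⟨insert n T.N, insert (m, l, n) T.E, T.root⟩ ∧ (m, l, n) ∉ T.E ∧ IsDT T' := by
  simp only [applyOp] at h
  split_ifs at h with hc
  simp only [not_or, not_not] at hc
  cases h
  exact ⟨rfl, hc⟩

theorem applyOp_del_eq_some {m l n : Node} (h : applyOp (.del m l n) T = some T') :
    T' = ⟨T.N.erase n, T.E.erase (m, l, n), T.root⟩ ∧ (m, l, n) ∈ T.E ∧ IsDT T' := by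
  simp only [applyOp] at h
  split_ifs at h with hc
  simp only [not_or, not_not] at hc
  cases h
  exact ⟨rfl, hc⟩

theorem applyOp_isDT (h : applyOp o T = some T') : IsDT T' := by
  cases o with
  | add m l n => exact (applyOp_add_eq_some h).2.2
  | del m l n => exact (applyOp_del_eq_some h).2.2

theorem IsDT.exists_parent (hT : IsDT T) (hx : x ∈ T.N)
    (hr : x ≠ T.root) : ∃ m l, (m, l, x) ∈ T.E := by
  rcases (hT.2.2.2.2 x hx).cases_tail with h | ⟨m, -, l, hl⟩
  · exact absurd h hr
  · exact ⟨m, l, hl⟩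

theorem IsDT.self_loop_not_mem (hT : IsDT T) (x : Node) (l : Label) : (x, l, x) ∉ T.E := by
  intro hloop
  obtain ⟨-, hends, huniq, hroot, hreach⟩ := hT
  -- Walking down from the root, the unique parent edge of `x` is the loop, so `x` is never reached.
  have hne : ∀ z, Relation.ReflTransGen (estep ↑T.E) T.root z → z ≠ x := by
    intro z hz
    induction hz with
    | refl => exact fun h => hroot _ hloop h.symm
    | tail _ hbc ih =>
      rintro rfl
      obtain ⟨l', hl'⟩ := hbc
      exact ih (congrArg Prod.fst (huniq _ hl' _ hloop rfl))
  exact hne x (hreach x (hends _ hloop).2) rfl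

theorem applyOp_src_ne_tgt (hT : IsDT T) (h : applyOp o T = some T') :
    o.src ≠ o.tgt := by
  cases o with
  | add m l n =>
    obtain ⟨rfl, -, hT'⟩ := applyOp_add_eq_some h
    rintro (rfl : m = n)
    exact hT'.self_loop_not_mem m l (Finset.mem_insert_self _ _)
  | del m l n =>
    rintro (rfl : m = n)
    exact hT.self_loop_not_mem m l (applyOp_del_eq_some h).2.1

theorem tgt_not_mem_of_applyOp_add {m l n : Node} (hT : IsDT T)
    (h : applyOp (.add m l n) T = some T') : n ∉ T.N := by
  obtain ⟨rfl, hnew, hT'⟩ := applyOp_add_eq_some h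
  intro hn
  by_cases hr : n = T.root
  · exact hT'.2.2.2.1 _ (Finset.mem_insert_self _ _) hr
  · obtain ⟨m', l', hpar⟩ := hT.exists_parent hn hr
    have := hT'.2.2.1 _ (Finset.mem_insert_of_mem hpar) _ (Finset.mem_insert_self _ _) rfl
    exact hnew (this ▸ hpar)

theorem mem_N_applyOp_of_tgt_ne
    (h : applyOp o T = some T') (hx : o.tgt ≠ x) : x ∈ T'.N ↔ x ∈ T.N := by
  cases o with
  | add m l n =>
    replace hx : n ≠ x := hx
    obtain ⟨rfl, -⟩ := applyOp_add_eq_some h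
    simp [Ne.symm hx]
  | del m l n =>
    replace hx : n ≠ x := hx
    obtain ⟨rfl, -⟩ := applyOp_del_eq_some h
    simp [Ne.symm hx]

theorem mem_E_applyOp_of_edge_ne
    (h : applyOp o T = some T') (he : o.edge ≠ e) : e ∈ T'.E ↔ e ∈ T.E := by
  cases o with
  | add m l n =>
    replace he : (m, l, n) ≠ e := he
    obtain ⟨rfl, -⟩ := applyOp_add_eq_some h
    simp [Ne.symm he]
  | del m l n =>
    replace he : (m, l, n) ≠ e := he
    obtain ⟨rfl, -⟩ := applyOp_del_eq_some h
    simp [Ne.symm he]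

theorem mem_N_before_applyOp_iff (hT : IsDT T)
    (h : applyOp o T = some T') (hx : o.src = x ∨ o.tgt = x) :
    x ∈ T.N ↔ ¬∃ m l, o = .add m l x := by
  cases o with
  | add m l n =>
    by_cases hn : n = x
    · subst hn
      exact iff_of_false (tgt_not_mem_of_applyOp_add hT h) (not_not.mpr ⟨m, l, rfl⟩)
    · obtain rfl : m = x := hx.resolve_right hn
      obtain ⟨rfl, -, hT'⟩ := applyOp_add_eq_some h
      have hm := (hT'.2.1 _ (Finset.mem_insert_self _ _)).1
      exact iff_of_true ((Finset.mem_insert.mp hm).resolve_left (Ne.symm hn)) (by simp [hn])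
  | del m l n =>
    have hends := hT.2.1 _ (applyOp_del_eq_some h).2.1
    refine iff_of_true ?_ (by simp)
    rcases hx with rfl | rfl
    exacts [hends.1, hends.2]

theorem mem_N_after_applyOp_iff (hT : IsDT T)
    (h : applyOp o T = some T') (hx : o.src = x ∨ o.tgt = x) :
    x ∈ T'.N ↔ ¬∃ m l, o = .del m l x := by
  cases o with
  | add m l n =>
    obtain ⟨rfl, -, hT'⟩ := applyOp_add_eq_some h
    have hends := hT'.2.1 _ (Finset.mem_insert_self _ _)
    refine iff_of_true ?_ (by simp)
    rcases hx with rfl | rfl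
    exacts [hends.1, hends.2]
  | del m l n =>
    obtain ⟨rfl, hmem, -⟩ := applyOp_del_eq_some h
    by_cases hn : n = x
    · subst hn
      exact iff_of_false (by simp) (not_not.mpr ⟨m, l, rfl⟩)
    · obtain rfl : m = x := hx.resolve_right hn
      exact iff_of_true (Finset.mem_erase.mpr ⟨Ne.symm hn, (hT.2.1 _ hmem).1⟩) (by simp [hn])

end ApplyOp

section ApplyOps

variable {os os₁ os₂ : List Op} {o : Op} {T T' : Tree3} {x : Node} {e : Edge}

theorem applyOps_isDT (hT : IsDT T) (h : applyOps os T = some T') : IsDT T' := by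
  induction os generalizing T with
  | nil => cases h; exact hT
  | cons o os ih =>
    obtain ⟨T₁, h₁, h⟩ := Option.bind_eq_some_iff.mp h
    exact ih (applyOp_isDT h₁) h

theorem applyOps_append_cons (h : applyOps (os₁ ++ o :: os₂) T = some T') :
    ∃ T₁ T₂, applyOps os₁ T = some T₁ ∧ applyOp o T₁ = some T₂ ∧ applyOps os₂ T₂ = some T' := by
  obtain ⟨T₁, h₁, h⟩ := Option.bind_eq_some_iff.mp (applyOps_append ▸ h)
  obtain ⟨T₂, h₂, h⟩ := Option.bind_eq_some_iff.mp h
  exact ⟨T₁, T₂, h₁, h₂, h⟩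

theorem applyOps_src_ne_tgt (hT : IsDT T) (h : applyOps os T = some T') (ho : o ∈ os) : o.src ≠ o.tgt := by
  obtain ⟨os₁, os₂, rfl⟩ := List.append_of_mem ho
  obtain ⟨T₁, T₂, h₁, h₂, -⟩ := applyOps_append_cons h
  exact applyOp_src_ne_tgt (applyOps_isDT hT h₁) h₂

theorem applyOps_iff_of_applyOp_iff {P : Tree3 → Prop}
    (hP : ∀ o ∈ os, ∀ {T T'}, applyOp o T = some T' → (P T' ↔ P T))
    (h : applyOps os T = some T') : P T' ↔ P T := by
  induction os generalizing T with
  | nil => cases h; rfl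
  | cons o os ih =>
    obtain ⟨T₁, h₁, h⟩ := Option.bind_eq_some_iff.mp h
    rw [ih (fun o' ho' => hP o' (List.mem_cons_of_mem _ ho')) h, hP o List.mem_cons_self h₁]

theorem mem_N_applyOps_of_tgt_ne
    (h : applyOps os T = some T') (hx : ∀ o ∈ os, o.tgt ≠ x) : x ∈ T'.N ↔ x ∈ T.N :=
  applyOps_iff_of_applyOp_iff (fun o ho _ _ h => mem_N_applyOp_of_tgt_ne h (hx o ho)) h

theorem mem_E_applyOps_of_edge_ne
    (h : applyOps os T = some T') (he : ∀ o ∈ os, o.edge ≠ e) : e ∈ T'.E ↔ e ∈ T.E :=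
  applyOps_iff_of_applyOp_iff (fun o ho _ _ h => mem_E_applyOp_of_edge_ne h (he o ho)) h

theorem mem_input_N_iff_of_eq_append_cons
    (hT : IsDT T) (h : applyOps (os₁ ++ o :: os₂) T = some T')
    (hx : o.src = x ∨ o.tgt = x) (h₁ : ∀ b ∈ os₁, b.tgt ≠ x) :
    x ∈ T.N ↔ ¬∃ m l, o = .add m l x := by
  obtain ⟨T₁, T₂, h₁', ho, -⟩ := applyOps_append_cons h
  rw [← mem_N_applyOps_of_tgt_ne h₁' h₁]
  exact mem_N_before_applyOp_iff (applyOps_isDT hT h₁') ho hx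

theorem mem_output_N_iff_of_eq_append_cons
    (hT : IsDT T) (h : applyOps (os₁ ++ o :: os₂) T = some T')
    (hx : o.src = x ∨ o.tgt = x) (h₂ : ∀ b ∈ os₂, b.tgt ≠ x) :
    x ∈ T'.N ↔ ¬∃ m l, o = .del m l x := by
  obtain ⟨T₁, T₂, h₁, ho, h₂'⟩ := applyOps_append_cons h
  rw [mem_N_applyOps_of_tgt_ne h₂' h₂]
  exact mem_N_after_applyOp_iff (applyOps_isDT hT h₁) ho hx

end ApplyOps

theorem Op.edge_tgt (o : Op) : o.edge.2.2 = o.tgt := by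
  cases o <;> rfl

theorem EminI_diff_DELs_subset_ADDs (S : QLSchedule) : EminI S \ DELs S ⊆ ADDs S := by
  rintro ⟨m, l, n⟩ ⟨hfirst, hnotDel⟩
  replace hfirst : firstEdgeOp S (m, l, n) = some (.del m l n) := hfirst
  obtain ⟨o, hlast⟩ : ∃ o, lastEdgeOp S (m, l, n) = some o := by
    refine Option.ne_none_iff_exists'.mp fun hnone => ?_
    simp only [lastEdgeOp, List.find?_eq_none, List.mem_reverse] at hnone
    exact hnone _ (List.mem_of_find?_eq_some hfirst) (by simp [Op.edge])
  have hedge : o.edge = (m, l, n) := by simpa using List.find?_some hlast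
  cases o with
  | add => cases hedge; exact hlast
  | del => cases hedge; exact absurd hlast hnotDel

theorem EminO_eq (S : QLSchedule) : EminO S = (EminI S \ DELs S) ∪ ADDs S :=
  (Set.union_eq_self_of_subset_left (EminI_diff_DELs_subset_ADDs S)).symm

theorem EmaxO_eq (S : QLSchedule) : EmaxO S = (EmaxI S \ DELs S) ∪ ADDs S := by
  rw [EmaxO, EmaxI, EminO_eq]
  ext e
  have hD : e ∈ DELs S → occursTgt S e.2.2 := fun h =>
    ⟨_, List.mem_reverse.mp (List.mem_of_find?_eq_some h), rfl⟩
  simp only [Set.mem_union, Set.mem_sdiff, Set.mem_ofPred_eq]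
  tauto

def Mentions (S : QLSchedule) (x : Node) : Prop := ∃ o ∈ ops S, o.src = x ∨ o.tgt = x

theorem firstNodeOp_eq_none_iff {S : QLSchedule} {x : Node} :
    firstNodeOp S x = none ↔ ¬Mentions S x := by
  simp [firstNodeOp, Mentions]

theorem lastNodeOp_eq_none_iff {S : QLSchedule} {x : Node} :
    lastNodeOp S x = none ↔ ¬Mentions S x := by
  simp [lastNodeOp, Mentions]

theorem mentions_of_lastEdgeOp_eq_some {S : QLSchedule} {m l x : Node} {o : Op}
    (h : lastEdgeOp S (m, l, x) = some o) : Mentions S x := by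
  have hedge : o.edge = (m, l, x) := by simpa using List.find?_some h
  exact ⟨o, List.mem_reverse.mp (List.mem_of_find?_eq_some h), Or.inr (by rw [← o.edge_tgt, hedge])⟩

theorem mem_NminI_iff_of_firstNodeOp_eq_some {S : QLSchedule} {x : Node} {o : Op}
    (h : firstNodeOp S x = some o) (ho : o.src ≠ o.tgt) :
    x ∈ NminI S ↔ ¬∃ m l, o = .add m l x := by
  have hx : o.src = x ∨ o.tgt = x := by simpa using List.find?_some h
  cases o <;> simp only [Op.src, Op.tgt] at hx ho <;> simp [NminI, h] <;> grind

theorem mem_NminO_iff_of_lastNodeOp_eq_some {S : QLSchedule} {x : Node} {o : Op}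
    (h : lastNodeOp S x = some o) (ho : o.src ≠ o.tgt) :
    x ∈ NminO S ↔ ¬∃ m l, o = .del m l x := by
  have hx : o.src = x ∨ o.tgt = x := by simpa using List.find?_some h
  cases o <;> simp only [Op.src, Op.tgt] at hx ho <;> simp [NminO, h] <;> grind

section Run

variable {S : QLSchedule} {T T' : Tree3} {x : Node}

theorem mem_input_N_iff_of_firstNodeOp_eq_some (hT : IsDT T)
    (hrun : applyOps (ops S) T = some T') {o : Op} (h : firstNodeOp S x = some o) :
    x ∈ T.N ↔ ¬∃ m l, o = .add m l x := by
  obtain ⟨hx, os₁, os₂, hS, h₁⟩ := List.find?_eq_some_iff_append.mp h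
  exact mem_input_N_iff_of_eq_append_cons hT (hS ▸ hrun) (by simpa using hx)
    (fun b hb => (by simpa using h₁ b hb : _ ∧ _).2)

theorem mem_output_N_iff_of_lastNodeOp_eq_some (hT : IsDT T)
    (hrun : applyOps (ops S) T = some T') {o : Op} (h : lastNodeOp S x = some o) :
    x ∈ T'.N ↔ ¬∃ m l, o = .del m l x := by
  obtain ⟨os₁, os₂, hS, h₂⟩ := List.eq_append_cons_of_find?_reverse_eq_some h
  exact mem_output_N_iff_of_eq_append_cons hT (hS ▸ hrun) (by simpa using List.find?_some h)
    (fun b hb => (by simpa using h₂ b hb : _ ∧ _).2)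

theorem mem_NminI_iff (hT : IsDT T) (hrun : applyOps (ops S) T = some T') :
    x ∈ NminI S ↔ Mentions S x ∧ x ∈ T.N := by
  cases h : firstNodeOp S x with
  | none => simp [NminI, h, firstNodeOp_eq_none_iff.mp h]
  | some o =>
    have hm : Mentions S x := by_contra fun hm => by simp [firstNodeOp_eq_none_iff.mpr hm] at h
    rw [and_iff_right hm, mem_input_N_iff_of_firstNodeOp_eq_some hT hrun h,
      mem_NminI_iff_of_firstNodeOp_eq_some h
        (applyOps_src_ne_tgt hT hrun (List.mem_of_find?_eq_some h))]

theorem mem_NmaxI_iff (hT : IsDT T) (hrun : applyOps (ops S) T = some T') :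
    x ∈ NmaxI S ↔ ¬Mentions S x ∨ x ∈ T.N := by
  cases h : firstNodeOp S x with
  | none => simp [NmaxI, h, firstNodeOp_eq_none_iff.mp h]
  | some o =>
    have hm : Mentions S x := by_contra fun hm => by simp [firstNodeOp_eq_none_iff.mpr hm] at h
    simp [NmaxI, h, hm, mem_input_N_iff_of_firstNodeOp_eq_some hT hrun h]

theorem mem_NminO_iff (hT : IsDT T) (hrun : applyOps (ops S) T = some T') :
    x ∈ NminO S ↔ Mentions S x ∧ x ∈ T'.N := by
  cases h : lastNodeOp S x with
  | none => simp [NminO, h, lastNodeOp_eq_none_iff.mp h]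
  | some o =>
    have hm : Mentions S x := by_contra fun hm => by simp [lastNodeOp_eq_none_iff.mpr hm] at h
    rw [and_iff_right hm, mem_output_N_iff_of_lastNodeOp_eq_some hT hrun h,
      mem_NminO_iff_of_lastNodeOp_eq_some h
        (applyOps_src_ne_tgt hT hrun (List.mem_reverse.mp (List.mem_of_find?_eq_some h)))]

theorem mem_NmaxO_iff (hT : IsDT T) (hrun : applyOps (ops S) T = some T') :
    x ∈ NmaxO S ↔ ¬Mentions S x ∨ x ∈ T'.N := by
  cases h : lastNodeOp S x with
  | none => simp [NmaxO, h, lastNodeOp_eq_none_iff.mp h]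
  | some o =>
    have hm : Mentions S x := by_contra fun hm => by simp [lastNodeOp_eq_none_iff.mpr hm] at h
    simp [NmaxO, h, hm, mem_output_N_iff_of_lastNodeOp_eq_some hT hrun h]

theorem mem_output_E_of_mem_ADDs (hrun : applyOps (ops S) T = some T') {e : Edge}
    (h : e ∈ ADDs S) : e ∈ T'.E := by
  obtain ⟨os₁, os₂, hS, h₂⟩ := List.eq_append_cons_of_find?_reverse_eq_some h
  obtain ⟨T₁, T₂, -, hadd, hrest⟩ := applyOps_append_cons (hS ▸ hrun)
  rw [mem_E_applyOps_of_edge_ne hrest (fun b hb => by simpa using h₂ b hb),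
    (applyOp_add_eq_some hadd).1]
  exact Finset.mem_insert_self _ _

theorem mem_output_N_iff (hT : IsDT T) (hrun : applyOps (ops S) T = some T') :
    x ∈ T'.N ↔
      (x ∈ T.N ∧ ¬∃ m l, (m, l, x) ∈ DELs S) ∨ ∃ m l, (m, l, x) ∈ ADDs S := by
  have hADD : (∃ m l, (m, l, x) ∈ ADDs S) → x ∈ T'.N := fun ⟨_, _, h⟩ =>
    ((applyOps_isDT hT hrun).2.1 _ (mem_output_E_of_mem_ADDs hrun h)).2
  cases hlast : (ops S).reverse.find? (fun o => o.tgt == x) with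
  | none =>
    have hno : ∀ o ∈ ops S, o.tgt ≠ x := by simpa using hlast
    have hnone : ∀ m l, lastEdgeOp S (m, l, x) = none := by
      intro m l
      simp only [lastEdgeOp, List.find?_eq_none, List.mem_reverse, beq_iff_eq]
      exact fun o ho he => hno o ho (by rw [← o.edge_tgt, he])
    rw [mem_N_applyOps_of_tgt_ne hrun hno]
    simp [DELs, ADDs, hnone]
  | some o =>
    have hox : o.tgt = x := by simpa using List.find?_some hlast
    have hedge : lastEdgeOp S o.edge = some o := List.find?_eq_some_of_imp hlast (by simp)
      (fun b hb => by simp only [beq_iff_eq] at hb ⊢; rw [← b.edge_tgt, hb, o.edge_tgt, hox])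
    obtain ⟨os₁, os₂, hS, h₂⟩ := List.eq_append_cons_of_find?_reverse_eq_some hlast
    have hout := mem_output_N_iff_of_eq_append_cons hT (hS ▸ hrun) (Or.inr hox)
      (fun b hb => by simpa using h₂ b hb)
    cases o with
    | add m l n =>
      obtain rfl : n = x := hox
      exact iff_of_true (hout.mpr (by simp)) (Or.inr ⟨m, l, hedge⟩)
    | del m l n =>
      obtain rfl : n = x := hox
      have hgone : n ∉ T'.N := fun hn => hout.mp hn ⟨m, l, rfl⟩
      exact iff_of_false hgone fun h => h.elim (fun h => h.2 ⟨m, l, hedge⟩) (hgone ∘ hADD)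

theorem NminO_eq (hT : IsDT T) (hrun : applyOps (ops S) T = some T') :
    NminO S = (NminI S \ {n | ∃ m l, (m, l, n) ∈ DELs S}) ∪ {n | ∃ m l, (m, l, n) ∈ ADDs S} := by
  ext x
  have hA : (∃ m l, (m, l, x) ∈ ADDs S) → Mentions S x :=
    fun ⟨_, _, h⟩ => mentions_of_lastEdgeOp_eq_some h
  simp only [Set.mem_union, Set.mem_sdiff, Set.mem_ofPred_eq, mem_NminO_iff hT hrun,
    mem_NminI_iff hT hrun, mem_output_N_iff hT hrun]
  generalize (∃ m l, (m, l, x) ∈ ADDs S) = A at *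
  tauto

theorem NmaxO_eq (hT : IsDT T) (hrun : applyOps (ops S) T = some T') :
    NmaxO S = (NmaxI S \ {n | ∃ m l, (m, l, n) ∈ DELs S}) ∪ {n | ∃ m l, (m, l, n) ∈ ADDs S} := by
  ext x
  have hD : (∃ m l, (m, l, x) ∈ DELs S) → Mentions S x :=
    fun ⟨_, _, h⟩ => mentions_of_lastEdgeOp_eq_some h
  simp only [Set.mem_union, Set.mem_sdiff, Set.mem_ofPred_eq, mem_NmaxO_iff hT hrun,
    mem_NmaxI_iff hT hrun, mem_output_N_iff hT hrun]
  generalize (∃ m l, (m, l, x) ∈ DELs S) = D at *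
  tauto

end Run

/-- Relations between the basic input and output sets of a consistent
QL schedule via its addition and deletion sets. -/
theorem output_sets_from_input_sets (S : QLSchedule) (h : ConsistentQL S) :
    NminO S = (NminI S \ {n : Node | ∃ m l, (m, l, n) ∈ DELs S}) ∪
              {n : Node | ∃ m l, (m, l, n) ∈ ADDs S} ∧
    NmaxO S = (NmaxI S \ {n : Node | ∃ m l, (m, l, n) ∈ DELs S}) ∪
              {n : Node | ∃ m l, (m, l, n) ∈ ADDs S} ∧
    EminO S = (EminI S \ DELs S) ∪ ADDs S ∧
    EmaxO S = (EmaxI S \ DELs S) ∪ ADDs S := by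
  obtain ⟨T, hT, hdef⟩ := h
  obtain ⟨T', hrun⟩ := Option.isSome_iff_exists.mp hdef
  rw [applyQL_eq_applyOps] at hrun
  exact ⟨NminO_eq hT hrun, NmaxO_eq hT hrun, EminO_eq S, EmaxO_eq S⟩
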